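/- arXiv:2410.19376 — 2 statements merged into one kernel-verified Lean document; each statement's English description precedes it below -/
import Mathlib

section
/- Let f : [c,d] → ℝ satisfy: (1) for every s ∈ (c,d], there exists r with c ≤ r < s such that f(x) < f(s) for all x with r ≤ x < s; and (2) for all s ∈ [c,d) and all t with s < t ≤ d, there exists x with s < x ≤ t and f(s) < f(x). Then f is strictly increasing on [c,d]. -/
theorem strict_increase (c d : ℝ) (hcd : c < d) (f : ℝ → ℝ)
    (h1 : ∀ s, c < s → s ≤ d → ∃ r, c ≤ r ∧ r < s ∧ ∀ x, r ≤ x → x < s → f x < f s)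
    (h2 : ∀ s, c ≤ s → s < d → ∀ t, s < t → t ≤ d → ∃ x, s < x ∧ x ≤ t ∧ f s < f x) :
    ∀ u ∈ Set.Icc c d, ∀ v ∈ Set.Icc c d, u < v → f u < f v := by
  rintro u ⟨hcu, hud⟩ v ⟨hcv, hvd⟩ huv
  set S : Set ℝ := {x | u ≤ x ∧ x ≤ v ∧ f u < f x} with hS
  have hud' : u < d := lt_of_lt_of_le huv hvd
  obtain ⟨x0, hx0u, hx0v, hx0f⟩ := h2 u hcu hud' v huv hvd
  have hx0S : x0 ∈ S := ⟨le_of_lt hx0u, hx0v, hx0f⟩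
  have hne : S.Nonempty := ⟨x0, hx0S⟩
  have hbdd : BddAbove S := ⟨v, fun x hx => hx.2.1⟩
  set s := sSup S with hs
  have hus : u < s := lt_of_lt_of_le hx0u (le_csSup hbdd hx0S)
  have hsv : s ≤ v := csSup_le hne (fun x hx => hx.2.1)
  have hcs : c < s := lt_of_le_of_lt hcu hus
  have hsd : s ≤ d := le_trans hsv hvd
  obtain ⟨r, _, hrs, hr⟩ := h1 s hcs hsd
  have hmax : max r u < s := max_lt hrs hus
  obtain ⟨z, hzS, hzmax⟩ := exists_lt_of_lt_csSup hne hmax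
  have hzs : z ≤ s := le_csSup hbdd hzS
  have hfs : f u < f s := by
    rcases lt_or_eq_of_le hzs with h | h
    · exact lt_trans hzS.2.2 (hr z (le_trans (le_max_left r u) (le_of_lt hzmax)) h)
    · exact h ▸ hzS.2.2
  rcases lt_or_eq_of_le hsv with h | h
  · exfalso
    obtain ⟨x, hsx, hxv, hfx⟩ := h2 s (le_of_lt hcs) (lt_of_lt_of_le h hvd) v h hvd
    have : x ∈ S := ⟨le_of_lt (lt_trans hus hsx), hxv, lt_trans hfs hfx⟩
    exact absurd (le_csSup hbdd this) (not_le.mpr hsx)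
  · exact h ▸ hfs
end

section
/- Let f : [c,d] → ℝ satisfy: (1) the lower left Dini derivative of f is positive at every s ∈ (c,d], and (2) the upper right Dini derivative of f is positive at every s ∈ [c,d). Then f is strictly increasing on [c,d]. -/
lemma supPos_aux {S : Set ℝ} (h : 0 < sSup S) : ∃ y ∈ S, 0 < y := by
  by_contra hc
  push_neg at hc
  have : sSup S ≤ 0 := Real.sSup_le hc le_rfl
  linarith

lemma infPos_mem_aux {S : Set ℝ} (h : 0 < sInf S) {y : ℝ} (hy : y ∈ S) : 0 < y := by
  by_cases hb : BddBelow S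
  · exact lt_of_lt_of_le h (csInf_le hb hy)
  · rw [Real.sInf_of_not_bddBelow hb] at h; exact absurd h (lt_irrefl 0)

theorem dini_pos_strict_increase (c d : ℝ) (hcd : c < d) (f : ℝ → ℝ)
    (h1 : ∀ s, c < s → s ≤ d →
      0 < sSup {y : ℝ | ∃ r, c ≤ r ∧ r < s ∧
        y = sInf ((fun x => (f s - f x) / (s - x)) '' Set.Ico r s)})
    (h2 : ∀ s, c ≤ s → s < d →
      0 < sInf {y : ℝ | ∃ t, s < t ∧ t ≤ d ∧
        y = sSup ((fun x => (f x - f s) / (x - s)) '' Set.Ioc s t)}) :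
    ∀ u ∈ Set.Icc c d, ∀ v ∈ Set.Icc c d, u < v → f u < f v := by
  -- H1: left-neighborhood strict bound
  have H1 : ∀ s, c < s → s ≤ d → ∃ r, c ≤ r ∧ r < s ∧
      ∀ x, r ≤ x → x < s → f x < f s := by
    intro s hs1 hs2
    obtain ⟨y, ⟨r, hr1, hr2, hy⟩, hypos⟩ := supPos_aux (h1 s hs1 hs2)
    refine ⟨r, hr1, hr2, ?_⟩
    intro x hx1 hx2
    have hmem : (f s - f x) / (s - x) ∈
        ((fun x => (f s - f x) / (s - x)) '' Set.Ico r s) := ⟨x, ⟨hx1, hx2⟩, rfl⟩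
    have hq : 0 < (f s - f x) / (s - x) := infPos_mem_aux (hy ▸ hypos) hmem
    rcases div_pos_iff.mp hq with ⟨ha, _⟩ | ⟨_, hb⟩
    · linarith
    · linarith
  -- H2: points just to the right where f is larger
  have H2 : ∀ s, c ≤ s → s < d → ∀ t, s < t → t ≤ d →
      ∃ x, s < x ∧ x ≤ t ∧ f s < f x := by
    intro s hs1 hs2 t ht1 ht2
    have hmem : sSup ((fun x => (f x - f s) / (x - s)) '' Set.Ioc s t) ∈
        {y : ℝ | ∃ t', s < t' ∧ t' ≤ d ∧
          y = sSup ((fun x => (f x - f s) / (x - s)) '' Set.Ioc s t')} :=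
      ⟨t, ht1, ht2, rfl⟩
    have hsup : 0 < sSup ((fun x => (f x - f s) / (x - s)) '' Set.Ioc s t) :=
      infPos_mem_aux (h2 s hs1 hs2) hmem
    obtain ⟨y, ⟨x, hx, hyx⟩, hypos⟩ := supPos_aux hsup
    refine ⟨x, hx.1, hx.2, ?_⟩
    rw [← hyx] at hypos
    rcases div_pos_iff.mp hypos with ⟨ha, _⟩ | ⟨_, hb⟩
    · linarith
    · linarith [hx.1]
  -- main argument
  intro u hu v hv huv
  set S : Set ℝ := {x | u < x ∧ x ≤ v ∧ f u < f x} with hS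
  obtain ⟨x0, hx01, hx02, hx03⟩ := H2 u hu.1 (lt_of_lt_of_le huv hv.2) v huv hv.2
  have hx0S : x0 ∈ S := ⟨hx01, hx02, hx03⟩
  have hne : S.Nonempty := ⟨x0, hx0S⟩
  have hbdd : BddAbove S := ⟨v, fun x hx => hx.2.1⟩
  set m := sSup S with hm
  have hum : u < m := lt_of_lt_of_le hx01 (le_csSup hbdd hx0S)
  have hmv : m ≤ v := csSup_le hne (fun x hx => hx.2.1)
  have hfum : f u < f m := by
    obtain ⟨r, hr1, hr2, hr3⟩ := H1 m (lt_of_le_of_lt hu.1 hum) (le_trans hmv hv.2)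
    have hlt : max r u < m := max_lt hr2 hum
    obtain ⟨x, hxS, hxgt⟩ := exists_lt_of_lt_csSup hne hlt
    have hxle : x ≤ m := le_csSup hbdd hxS
    rcases eq_or_lt_of_le hxle with heq | hlt'
    · exact heq ▸ hxS.2.2
    · have hrx : r ≤ x := le_of_lt (lt_of_le_of_lt (le_max_left r u) hxgt)
      exact lt_trans hxS.2.2 (hr3 x hrx hlt')
  rcases eq_or_lt_of_le hmv with heq | hlt
  · exact heq ▸ hfum
  · obtain ⟨x, hx1, hx2, hx3⟩ :=
      H2 m (le_trans hu.1 hum.le) (lt_of_lt_of_le hlt hv.2) v hlt hv.2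
    have hxS : x ∈ S := ⟨lt_trans hum hx1, hx2, lt_trans hfum hx3⟩
    have : x ≤ m := le_csSup hbdd hxS
    linarith
end
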